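/- arXiv:2110.00982 — 4 statements merged into one kernel-verified Lean document; each statement's English description precedes it below -/
import Mathlib

section
/- Let (Ω, μ) be a probability space, E and F standard Borel spaces, A : Ω → E and V : Ω → F measurable, and let σ : F ≃ᵐ F be a measurable equivalence such that the law of (fun ω => (σ (V ω), A ω)) equals the law of (V, A). Then for (law of V)-almost every v ∈ F, the regular conditional distribution satisfies condDistrib A V μ (σ v) = condDistrib A V μ v. -/
/-!
The conditional distribution of `A` given `V` is, by definition, the disintegration of the joint
law of `(V, A)`, so the invariance hypothesis says that `A` has the same conditional distribution
given `σ ∘ V` as given `V`. On the other hand, relabelling the conditioning variable by the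
bijection `σ` merely reparametrizes the kernel: `condDistrib A (σ ∘ V) μ (σ v)` and
`condDistrib A V μ v` agree for almost every `v`, by uniqueness of disintegrations.
-/

open MeasureTheory ProbabilityTheory

lemma MeasureTheory.Measure.map_prodMap_compProd_comap {β β' Ω : Type*} [MeasurableSpace β]
    [MeasurableSpace β'] [MeasurableSpace Ω] (ν : Measure β) [SFinite ν] (κ : Kernel β' Ω)
    [IsSFiniteKernel κ] {e : β → β'} (he : Measurable e) :
    (ν ⊗ₘ κ.comap e he).map (Prod.map e id) = ν.map e ⊗ₘ κ := by
  ext s hs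
  rw [map_apply (he.prodMap measurable_id) hs, compProd_apply (he.prodMap measurable_id hs),
    compProd_apply hs,
    lintegral_map (Kernel.measurable_kernel_prodMk_left hs) he]
  rfl

lemma ProbabilityTheory.ae_condDistrib_comp_measurableEquiv_apply {α β β' Ω : Type*}
    [MeasurableSpace α] [MeasurableSpace β] [MeasurableSpace β'] [MeasurableSpace Ω]
    [StandardBorelSpace Ω] [Nonempty Ω] {μ : Measure α} [IsFiniteMeasure μ]
    {X : α → β} {Y : α → Ω} (hX : AEMeasurable X μ) (hY : AEMeasurable Y μ) (e : β ≃ᵐ β') :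
    ∀ᵐ x ∂μ.map X, condDistrib Y (e ∘ X) μ (e x) = condDistrib Y X μ x := by
  set κ := condDistrib Y (e ∘ X) μ
  have hκ : (κ.comap e e.measurable).comap e.symm e.symm.measurable = κ := by
    ext1 x; simp
  have hlaw : μ.map (fun a ↦ (X a, Y a)) = μ.map X ⊗ₘ κ.comap e e.measurable := by
    calc μ.map (fun a ↦ (X a, Y a))
        = (μ.map fun a ↦ ((e ∘ X) a, Y a)).map (Prod.map e.symm id) := by
          rw [AEMeasurable.map_map_of_aemeasurable (by fun_prop) (by fun_prop)]
          simp [Function.comp_def]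
      _ = (μ.map (e ∘ X) ⊗ₘ κ).map (Prod.map e.symm id) := by
          rw [compProd_map_condDistrib hY]
      _ = μ.map X ⊗ₘ κ.comap e e.measurable := by
          conv_lhs => rw [← hκ, Measure.map_prodMap_compProd_comap _ _ e.symm.measurable,
            AEMeasurable.map_map_of_aemeasurable (by fun_prop) (by fun_prop),
            ← Function.comp_assoc, MeasurableEquiv.symm_comp_self, Function.id_comp]
  filter_upwards [condDistrib_ae_eq_of_measure_eq_compProd X hY hlaw] with x hx
  exact hx.symm

theorem condDistrib_invariant_of_law_invariant_general
    {Ω E F : Type*} [MeasurableSpace Ω]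
    [MeasurableSpace E] [StandardBorelSpace E] [Nonempty E]
    [MeasurableSpace F]
    (μ : Measure Ω) [IsProbabilityMeasure μ]
    (A : Ω → E) (V : Ω → F) (hA : Measurable A) (hV : Measurable V)
    (σ : F ≃ᵐ F)
    (hsym : Measure.map (fun ω => (σ (V ω), A ω)) μ
      = Measure.map (fun ω => (V ω, A ω)) μ) :
    ∀ᵐ v ∂(Measure.map V μ), condDistrib A V μ (σ v) = condDistrib A V μ v := by
  have hsame : condDistrib A (σ ∘ V) μ = condDistrib A V μ := by
    rw [condDistrib, condDistrib]
    simp_rw [Function.comp_apply, hsym]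
  simpa only [hsame] using
    ae_condDistrib_comp_measurableEquiv_apply (μ := μ) hV.aemeasurable hA.aemeasurable σ

/-- If the joint law of `(V, A)` is invariant under a measurable symmetry `σ` of the
conditioning variable `V`, then the regular conditional distribution of `A` given `V` is
almost everywhere invariant under `σ`. -/
theorem condDistrib_invariant_of_law_invariant
    {Ω E F : Type*} [MeasurableSpace Ω]
    [MeasurableSpace E] [StandardBorelSpace E] [Nonempty E]
    [MeasurableSpace F] [StandardBorelSpace F]
    (μ : Measure Ω) [IsProbabilityMeasure μ]
    (A : Ω → E) (V : Ω → F) (hA : Measurable A) (hV : Measurable V)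
    (σ : F ≃ᵐ F)
    (hsym : Measure.map (fun ω => (σ (V ω), A ω)) μ
      = Measure.map (fun ω => (V ω, A ω)) μ) :
    ∀ᵐ v ∂(Measure.map V μ), condDistrib A V μ (σ v) = condDistrib A V μ v :=
  condDistrib_invariant_of_law_invariant_general μ A V hA hV σ hsym
end

section
/- Let (Ω, μ) be a probability space, let A : Ω → E_A, Z : Ω → E_Z, W : Ω → E_W be measurable maps into standard Borel spaces, and let U : Ω → ℝ be measurable. Let g : E_Z × E_A × ℝ → ℝ be measurable with u ↦ g(z, a, u) strictly increasing for every (z, a), and set X := fun ω => g (Z ω, A ω, U ω). Assume: (i) for every x ∈ ℝ, E[indicator {X ≤ x} | σ(Z, A, W)] = E[indicator {X ≤ x} | σ(Z, W)] μ-a.e. (X is conditionally independent of A given (Z, W)); (ii) for every u ∈ ℝ, E[indicator {U ≤ u} | σ(Z, A, W)] = E[indicator {U ≤ u} | σ(A, W)] μ-a.e. (U is conditionally independent of Z given (A, W)). Define V ω := (condDistrib X (Z, W) μ) ((Z ω, W ω)) (Set.Iic (X ω)) and V' ω := (condDistrib U (A, W) μ) ((A ω, W ω)) (Set.Iic (U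 ω)). Then V = V' μ-almost everywhere. -/
/-!
Let `T = (Z, A, W)`. Since `X = g(Z, A, U)` with `g` strictly increasing in `U`, the conditional
law of `X` given `T` is the image of the conditional law of `U` given `T` under
`u ↦ g(Z, A, u)`, and `{X ≤ X ω}` pulls back to `{U ≤ U ω}`; hence
`F_{X|T}(X | T) = F_{U|T}(U | T)` almost surely. The two conditional independence assumptions
say that conditioning on `T` may be replaced by conditioning on `(Z, W)` for `X` and on `(A, W)`
for `U`.
-/

open MeasureTheory ProbabilityTheory Set

lemma MeasureTheory.Measure.ext_of_Iic_rat (ν₁ ν₂ : Measure ℝ) [IsProbabilityMeasure ν₁]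
    [IsProbabilityMeasure ν₂] (h : ∀ q : ℚ, ν₁ (Iic (q : ℝ)) = ν₂ (Iic (q : ℝ))) : ν₁ = ν₂ := by
  refine ext_of_generate_finite _ ?_ Real.isPiSystem_Iic_rat ?_ (by simp)
  · rw [(inferInstance : BorelSpace ℝ).measurable_eq, Real.borel_eq_generateFrom_Iic_rat]
  · simp only [mem_iUnion, mem_singleton_iff, forall_exists_index]
    rintro s q rfl
    exact h q

lemma MeasureTheory.Measure.map_compProd_prodMk_fst {α β γ : Type*} [MeasurableSpace α]
    [MeasurableSpace β] [MeasurableSpace γ] (ν : Measure α) [SFinite ν] (κ : Kernel α β)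
    [IsSFiniteKernel κ] {f : α × β → γ} (hf : Measurable f) :
    (ν ⊗ₘ κ).map (fun p => (p.1, f p)) = ν ⊗ₘ (Kernel.id ×ₖ κ).map f := by
  have hmap : Measurable fun p : α × β => (p.1, f p) := measurable_fst.prodMk hf
  ext s hs
  rw [Measure.map_apply hmap hs, Measure.compProd_apply (hmap hs), Measure.compProd_apply hs]
  refine lintegral_congr fun a => ?_
  rw [Kernel.map_apply' _ hf _ (measurable_prodMk_left hs),
    Kernel.id_prod_apply' _ _ (hf (measurable_prodMk_left hs))]
  rfl

namespace ProbabilityTheory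

variable {Ω β γ : Type*} [MeasurableSpace Ω] [MeasurableSpace β] {μ : Measure Ω}
  [IsFiniteMeasure μ]

lemma condDistrib_comp_prodMk {Ω' : Type*} [MeasurableSpace Ω'] [StandardBorelSpace Ω']
    [Nonempty Ω'] [MeasurableSpace γ] [StandardBorelSpace γ] [Nonempty γ]
    {T : Ω → β} {Y : Ω → Ω'} (hY : AEMeasurable Y μ) {f : β × Ω' → γ} (hf : Measurable f) :
    condDistrib (fun ω => f (T ω, Y ω)) T μ
      =ᵐ[μ.map T] (Kernel.id ×ₖ condDistrib Y T μ).map f := by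
  by_cases hT : AEMeasurable T μ
  swap; · simp [Measure.map_of_not_aemeasurable hT, Filter.EventuallyEq]
  refine condDistrib_ae_eq_of_measure_eq_compProd T (hf.comp_aemeasurable (hT.prodMk hY)) ?_
  calc μ.map (fun ω => (T ω, f (T ω, Y ω)))
      = (μ.map fun ω => (T ω, Y ω)).map (fun p => (p.1, f p)) := by
        rw [AEMeasurable.map_map_of_aemeasurable (measurable_fst.prodMk hf).aemeasurable
          (hT.prodMk hY)]
        rfl
    _ = μ.map T ⊗ₘ (Kernel.id ×ₖ condDistrib Y T μ).map f := by
        rw [← compProd_map_condDistrib hY, Measure.map_compProd_prodMk_fst _ _ hf]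

lemma condDistrib_ae_eq_of_condExp_Iic_ae_eq [MeasurableSpace γ] {T₁ : Ω → β} {T₂ : Ω → γ}
    {Y : Ω → ℝ} (hT₁ : Measurable T₁) (hT₂ : Measurable T₂) (hY : Measurable Y)
    (h : ∀ q : ℚ, μ⟦Y ⁻¹' Iic (q : ℝ) | MeasurableSpace.comap T₁ inferInstance⟧
      =ᵐ[μ] μ⟦Y ⁻¹' Iic (q : ℝ) | MeasurableSpace.comap T₂ inferInstance⟧) :
    ∀ᵐ ω ∂μ, condDistrib Y T₁ μ (T₁ ω) = condDistrib Y T₂ μ (T₂ ω) := by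
  have hIic : ∀ q : ℚ, ∀ᵐ ω ∂μ,
      condDistrib Y T₁ μ (T₁ ω) (Iic (q : ℝ)) = condDistrib Y T₂ μ (T₂ ω) (Iic (q : ℝ)) := by
    intro q
    filter_upwards [condDistrib_ae_eq_condExp hT₁ hY measurableSet_Iic,
      condDistrib_ae_eq_condExp hT₂ hY measurableSet_Iic, h q] with ω h₁ h₂ h₁₂
    exact (ENNReal.toReal_eq_toReal_iff' (measure_ne_top _ _) (measure_ne_top _ _)).mp
      (by rw [← measureReal_def, ← measureReal_def, h₁, h₁₂, h₂])
  filter_upwards [ae_all_iff.mpr hIic] with ω hω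
  exact Measure.ext_of_Iic_rat _ _ hω

end ProbabilityTheory

theorem feasible_control_variable_general
    {Ω E_A E_Z E_W : Type*} [MeasurableSpace Ω]
    [MeasurableSpace E_A] [MeasurableSpace E_Z] [MeasurableSpace E_W]
    (μ : Measure Ω) [IsProbabilityMeasure μ]
    (A : Ω → E_A) (Z : Ω → E_Z) (W : Ω → E_W) (U : Ω → ℝ)
    (hA : Measurable A) (hZ : Measurable Z) (hW : Measurable W) (hU : Measurable U)
    (g : E_Z × E_A × ℝ → ℝ) (hg : Measurable g)
    (hmono : ∀ (z : E_Z) (a : E_A), StrictMono fun u => g (z, a, u))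
    (X : Ω → ℝ) (hX : ∀ ω, X ω = g (Z ω, A ω, U ω))
    (hXindep : ∀ x : ℝ,
      μ[Set.indicator {ω | X ω ≤ x} (fun _ => (1 : ℝ)) |
          MeasurableSpace.comap (fun ω => (Z ω, A ω, W ω)) inferInstance]
        =ᵐ[μ] μ[Set.indicator {ω | X ω ≤ x} (fun _ => (1 : ℝ)) |
          MeasurableSpace.comap (fun ω => (Z ω, W ω)) inferInstance])
    (hUindep : ∀ u : ℝ,
      μ[Set.indicator {ω | U ω ≤ u} (fun _ => (1 : ℝ)) |
          MeasurableSpace.comap (fun ω => (Z ω, A ω, W ω)) inferInstance]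
        =ᵐ[μ] μ[Set.indicator {ω | U ω ≤ u} (fun _ => (1 : ℝ)) |
          MeasurableSpace.comap (fun ω => (A ω, W ω)) inferInstance]) :
    (fun ω => condDistrib X (fun ω' => (Z ω', W ω')) μ (Z ω, W ω) (Set.Iic (X ω)))
      =ᵐ[μ]
      (fun ω => condDistrib U (fun ω' => (A ω', W ω')) μ (A ω, W ω) (Set.Iic (U ω))) := by
  set T : Ω → E_Z × E_A × E_W := fun ω => (Z ω, A ω, W ω)
  have hT : Measurable T := hZ.prodMk (hA.prodMk hW)
  have hF : Measurable fun p : (E_Z × E_A × E_W) × ℝ => g (p.1.1, p.1.2.1, p.2) := by fun_prop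
  have hXeq : X = fun ω => g ((T ω).1, (T ω).2.1, U ω) := funext hX
  have hXT : condDistrib X T μ =ᵐ[μ.map T]
      (Kernel.id ×ₖ condDistrib U T μ).map fun p => g (p.1.1, p.1.2.1, p.2) :=
    hXeq ▸ condDistrib_comp_prodMk hU.aemeasurable hF
  have hXZW := condDistrib_ae_eq_of_condExp_Iic_ae_eq hT (hZ.prodMk hW)
    (hXeq ▸ hF.comp (hT.prodMk hU)) fun q => hXindep q
  have hUAW := condDistrib_ae_eq_of_condExp_Iic_ae_eq hT (hA.prodMk hW) hU fun q => hUindep q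
  filter_upwards [hXZW, hUAW, ae_of_ae_map hT.aemeasurable hXT] with ω hXω hUω hXTω
  rw [← hXω, ← hUω, hXTω, Kernel.map_apply' _ hF _ measurableSet_Iic,
    Kernel.id_prod_apply' _ _ (hF measurableSet_Iic)]
  congr 1
  ext u
  simp [T, hX ω, (hmono (Z ω) (A ω)).le_iff_le]

/-- Lemma 2 (feasible control variable): with `X = g(Z, A, U)` strictly increasing in `U`,
if `X` is conditionally independent of `A` given `(Z, W)` and `U` is conditionally independent
of `Z` given `(A, W)`, then the feasible conditional CDF
`V = F_{X|Z,W}(X | Z, W)` equals the infeasible `F_{U|A,W}(U | A, W)` almost surely. -/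
theorem feasible_control_variable
    {Ω E_A E_Z E_W : Type*} [MeasurableSpace Ω]
    [MeasurableSpace E_A] [StandardBorelSpace E_A] [Nonempty E_A]
    [MeasurableSpace E_Z] [StandardBorelSpace E_Z] [Nonempty E_Z]
    [MeasurableSpace E_W] [StandardBorelSpace E_W] [Nonempty E_W]
    (μ : Measure Ω) [IsProbabilityMeasure μ]
    (A : Ω → E_A) (Z : Ω → E_Z) (W : Ω → E_W) (U : Ω → ℝ)
    (hA : Measurable A) (hZ : Measurable Z) (hW : Measurable W) (hU : Measurable U)
    (g : E_Z × E_A × ℝ → ℝ) (hg : Measurable g)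
    (hmono : ∀ (z : E_Z) (a : E_A), StrictMono fun u => g (z, a, u))
    (X : Ω → ℝ) (hX : ∀ ω, X ω = g (Z ω, A ω, U ω))
    (hXindep : ∀ x : ℝ,
      μ[Set.indicator {ω | X ω ≤ x} (fun _ => (1 : ℝ)) |
          MeasurableSpace.comap (fun ω => (Z ω, A ω, W ω)) inferInstance]
        =ᵐ[μ] μ[Set.indicator {ω | X ω ≤ x} (fun _ => (1 : ℝ)) |
          MeasurableSpace.comap (fun ω => (Z ω, W ω)) inferInstance])
    (hUindep : ∀ u : ℝ,
      μ[Set.indicator {ω | U ω ≤ u} (fun _ => (1 : ℝ)) |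
          MeasurableSpace.comap (fun ω => (Z ω, A ω, W ω)) inferInstance]
        =ᵐ[μ] μ[Set.indicator {ω | U ω ≤ u} (fun _ => (1 : ℝ)) |
          MeasurableSpace.comap (fun ω => (A ω, W ω)) inferInstance]) :
    (fun ω => condDistrib X (fun ω' => (Z ω', W ω')) μ (Z ω, W ω) (Set.Iic (X ω)))
      =ᵐ[μ]
      (fun ω => condDistrib U (fun ω' => (A ω', W ω')) μ (A ω, W ω) (Set.Iic (U ω))) :=
  feasible_control_variable_general μ A Z W U hA hZ hW hU g hg hmono X hX hXindep hUindep
end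

section
/- Let Ω be a measurable space, E_A and E_W standard Borel spaces, and let A : Ω → E_A, W : Ω → E_W, U : Ω → ℝ be measurable. Let F : E_A × E_W × ℝ → ℝ be measurable such that for every (a, w), the map u ↦ F(a, w, u) is strictly increasing. Then the σ-algebra on Ω generated by the map ω ↦ (A ω, W ω, F (A ω, W ω, U ω)) equals the σ-algebra generated by ω ↦ (A ω, W ω, U ω); that is, the two MeasurableSpace.comap's coincide. -/
/-- The σ-algebra generated by `(A, W, F(A, W, U))`, with `F` measurable and strictly increasing
in its last (real) argument, coincides with the σ-algebra generated by `(A, W, U)`. -/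
theorem comap_eq_of_strictMono_transform
    {Ω E_A E_W : Type*} [MeasurableSpace Ω]
    [MeasurableSpace E_A] [StandardBorelSpace E_A]
    [MeasurableSpace E_W] [StandardBorelSpace E_W]
    (A : Ω → E_A) (W : Ω → E_W) (U : Ω → ℝ)
    (hA : Measurable A) (hW : Measurable W) (hU : Measurable U)
    (F : E_A × E_W × ℝ → ℝ) (hF : Measurable F)
    (hmono : ∀ (a : E_A) (w : E_W), StrictMono fun u => F (a, w, u)) :
    MeasurableSpace.comap (fun ω => (A ω, W ω, F (A ω, W ω, U ω))) inferInstance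
      = MeasurableSpace.comap (fun ω => (A ω, W ω, U ω)) inferInstance := by
  set G : E_A × E_W × ℝ → E_A × E_W × ℝ := fun p => (p.1, p.2.1, F p) with hG
  have hGmeas : Measurable G :=
    measurable_fst.prodMk ((measurable_fst.comp measurable_snd).prodMk hF)
  have hGinj : Function.Injective G := by
    rintro ⟨a, w, u⟩ ⟨a', w', u'⟩ h
    simp only [hG, Prod.mk.injEq] at h
    obtain ⟨rfl, rfl, hu⟩ := h
    exact Prod.ext rfl (Prod.ext rfl ((hmono a w).injective hu))
  have hemb : MeasurableEmbedding G := hGmeas.measurableEmbedding hGinj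
  have : (fun ω => (A ω, W ω, F (A ω, W ω, U ω))) = G ∘ fun ω => (A ω, W ω, U ω) := rfl
  rw [this, ← MeasurableSpace.comap_comp, hemb.comap_eq]
end

section
/- Let (Ω, μ) be a probability space; let A : Ω → E_A, X : Ω → E_X, Z : Ω → E_Z, W : Ω → E_W be measurable maps into standard Borel spaces; let φ : E_X × E_Z × E_W → E_V be measurable into a standard Borel space and set V := fun ω => φ (X ω, Z ω, W ω). Assume (sufficiency): for every bounded measurable f : E_A → ℝ, E[f ∘ A | σ(X, Z, W)] = E[f ∘ A | σ(W)] μ-almost everywhere. Let κ := condDistrib A W μ. Then for every bounded measurable h : E_A × E_V × E_W → ℝ, defining H (v, w) := ∫ h (a, v, w) d(κ w)(a), one has E[h(A, V, W) | σ(X, V, W)] = H(V, W) μ-almost everywhere; in particular, the conditional expectation of h(A, V, W) given (X, V, W) does not depend on X. -/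
/-!
Let `T = (X, Z, W)`. Sufficiency says that `κ (W ω)`, a version of the conditional law of `A`
given `W`, is also one given `T`; hence `condDistrib A T μ` agrees a.e. with `κ` precomposed with
the projection `T ↦ W`. Disintegrating along `T` then computes `E[h(A, V, W) | σ(T)]` as
`H(V, W)`, because `V` and `W` are functions of `T`. Since `σ(X, V, W) ≤ σ(T)` and `H(V, W)` is
already `σ(X, V, W)`-measurable, the tower property gives the same conditional expectation given
`σ(X, V, W)`.
-/

open MeasureTheory ProbabilityTheory

section CondDistrib

variable {Ω α β γ : Type*} {mΩ : MeasurableSpace Ω} {μ : Measure Ω} [IsFiniteMeasure μ]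
  [MeasurableSpace α] [StandardBorelSpace α] [Nonempty α] [mβ : MeasurableSpace β]
  [MeasurableSpace γ] {A : Ω → α} {T : Ω → β}

theorem condDistrib_ae_eq_of_ae_eq_condExp (hA : Measurable A) (hT : Measurable T)
    (η : Kernel β α) [IsFiniteKernel η]
    (hη : ∀ t, MeasurableSet t → (fun ω => (η (T ω)).real t) =ᵐ[μ] μ⟦A ⁻¹' t | mβ.comap T⟧) :
    condDistrib A T μ =ᵐ[μ.map T] η := by
  have rectangle : ∀ s, MeasurableSet s → ∀ t, MeasurableSet t →
      μ.map (fun ω => (T ω, A ω)) (s ×ˢ t) = (μ.map T ⊗ₘ η) (s ×ˢ t) := by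
    intro s hs t ht
    have hae : ∀ᵐ ω ∂μ, η (T ω) t = condDistrib A T μ (T ω) t := by
      filter_upwards [hη t ht, condDistrib_ae_eq_condExp hT hA ht] with ω hηω hcd
      exact (ENNReal.toReal_eq_toReal_iff' (measure_ne_top _ _) (measure_ne_top _ _)).mp
        (hηω.trans hcd.symm)
    rw [Measure.map_apply (hT.prodMk hA) (hs.prod ht), Set.mk_preimage_prod,
      Measure.compProd_apply_prod hs ht, setLIntegral_map hs (η.measurable_coe ht) hT,
      setLIntegral_congr_fun_ae (hT hs) (hae.mono fun ω h _ => h),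
      setLIntegral_preimage_condDistrib hT hA.aemeasurable ht hs]
  refine condDistrib_ae_eq_of_measure_eq_compProd T hA.aemeasurable ?_
  refine ext_of_generate_finite _ generateFrom_prod.symm isPiSystem_prod ?_ ?_
  · rintro _ ⟨s, hs, t, ht, rfl⟩
    exact rectangle s hs t ht
  · simpa using rectangle _ .univ _ .univ

theorem condDistrib_ae_eq_comap_of_condExp_indicator_eq (hA : Measurable A) (hT : Measurable T)
    {g : β → γ} (hg : Measurable g)
    (hsuff : ∀ t, MeasurableSet t →
      μ⟦A ⁻¹' t | mβ.comap T⟧ =ᵐ[μ] μ⟦A ⁻¹' t | MeasurableSpace.comap (g ∘ T) inferInstance⟧) :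
    condDistrib A T μ =ᵐ[μ.map T] (condDistrib A (g ∘ T) μ).comap g hg :=
  condDistrib_ae_eq_of_ae_eq_condExp hA hT _ fun t ht =>
    (condDistrib_ae_eq_condExp (hg.comp hT) hA ht).trans (hsuff t ht).symm

theorem condExp_prod_ae_eq_integral_of_condDistrib_ae_eq (hA : Measurable A) (hT : Measurable T)
    {η : Kernel β α} (hη : condDistrib A T μ =ᵐ[μ.map T] η) {f : β × α → ℝ}
    (hf : StronglyMeasurable f) (hf_int : Integrable (fun ω => f (T ω, A ω)) μ) :
    μ[fun ω => f (T ω, A ω) | mβ.comap T] =ᵐ[μ] fun ω => ∫ a, f (T ω, a) ∂η (T ω) := by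
  filter_upwards [condExp_prod_ae_eq_integral_condDistrib hT hA.aemeasurable hf hf_int,
    ae_of_ae_map hT.aemeasurable hη] with ω hcond hω
  rw [hcond, hω]

end CondDistrib

theorem condExp_ae_eq_of_condExp_ae_eq_of_le {Ω : Type*} {m₁ m₂ m₀ : MeasurableSpace Ω}
    {μ : Measure Ω} [IsFiniteMeasure μ] {f g : Ω → ℝ} (h₁₂ : m₁ ≤ m₂) (h₂ : m₂ ≤ m₀)
    (hg : μ[f | m₂] =ᵐ[μ] g) (hgm : StronglyMeasurable[m₁] g) :
    μ[f | m₁] =ᵐ[μ] g :=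
  calc μ[f | m₁] =ᵐ[μ] μ[μ[f | m₂] | m₁] := (condExp_condExp_of_le h₁₂ h₂).symm
    _ =ᵐ[μ] μ[g | m₁] := condExp_congr_ae hg
    _ = g := condExp_of_stronglyMeasurable (h₁₂.trans h₂) hgm (integrable_condExp.congr hg)

theorem condexp_given_control_variable_general
    {Ω E_A E_X E_Z E_W E_V : Type*} [MeasurableSpace Ω]
    [MeasurableSpace E_A] [StandardBorelSpace E_A] [Nonempty E_A]
    [MeasurableSpace E_X]
    [MeasurableSpace E_Z]
    [MeasurableSpace E_W]
    [MeasurableSpace E_V]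
    (μ : Measure Ω) [IsProbabilityMeasure μ]
    (A : Ω → E_A) (X : Ω → E_X) (Z : Ω → E_Z) (W : Ω → E_W)
    (hA : Measurable A) (hX : Measurable X) (hZ : Measurable Z) (hW : Measurable W)
    (φ : E_X × E_Z × E_W → E_V) (hφ : Measurable φ)
    (V : Ω → E_V) (hV : ∀ ω, V ω = φ (X ω, Z ω, W ω))
    (hsuff : ∀ f : E_A → ℝ, Measurable f → (∃ C, ∀ a, |f a| ≤ C) →
      μ[fun ω => f (A ω) |
          MeasurableSpace.comap (fun ω => (X ω, Z ω, W ω)) inferInstance]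
        =ᵐ[μ] μ[fun ω => f (A ω) | MeasurableSpace.comap W inferInstance]) :
    ∀ h : E_A × E_V × E_W → ℝ, Measurable h → (∃ C, ∀ p, |h p| ≤ C) →
      μ[fun ω => h (A ω, V ω, W ω) |
          MeasurableSpace.comap (fun ω => (X ω, V ω, W ω)) inferInstance]
        =ᵐ[μ] fun ω => ∫ a, h (a, V ω, W ω) ∂(condDistrib A W μ (W ω)) := by
  intro h hh ⟨C, hC⟩
  obtain rfl : V = fun ω => φ (X ω, Z ω, W ω) := funext hV
  set T : Ω → E_X × E_Z × E_W := fun ω => (X ω, Z ω, W ω)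
  have hT : Measurable T := hX.prodMk (hZ.prodMk hW)
  have hproj : Measurable fun t : E_X × E_Z × E_W => t.2.2 := measurable_snd.comp measurable_snd
  have hkernel := condDistrib_ae_eq_comap_of_condExp_indicator_eq hA hT hproj fun t ht => by
    simpa only [← Set.indicator_comp_right, Function.comp_def] using
      hsuff (t.indicator fun _ => 1) (measurable_const.indicator ht)
        ⟨1, fun a => by by_cases ha : a ∈ t <;> simp [ha]⟩
  have hf : Measurable fun p : (E_X × E_Z × E_W) × E_A => h (p.2, φ p.1, p.1.2.2) := by
    fun_prop
  have hcond := condExp_prod_ae_eq_integral_of_condDistrib_ae_eq hA hT hkernel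
    hf.stronglyMeasurable (.of_bound (hf.comp (hT.prodMk hA)).aestronglyMeasurable C
      (ae_of_all _ fun _ => hC _))
  have hH : Measurable fun p : E_V × E_W => ∫ a, h (a, p.1, p.2) ∂condDistrib A W μ p.2 :=
    (show Measurable fun q : (E_V × E_W) × E_A => h (q.2, q.1) by fun_prop).stronglyMeasurable
      |>.integral_kernel_prod_right' (κ := (condDistrib A W μ).comap Prod.snd measurable_snd)
      |>.measurable
  have hle : MeasurableSpace.comap (fun ω => (X ω, φ (T ω), W ω)) inferInstance
      ≤ MeasurableSpace.comap T inferInstance :=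
    ((measurable_fst.prodMk (hφ.prodMk hproj)).comp (comap_measurable T)).comap_le
  exact condExp_ae_eq_of_condExp_ae_eq_of_le hle hT.comap_le hcond
    (hH.comp (measurable_snd.comp (comap_measurable _))).stronglyMeasurable

/-- Key identification step: under sufficiency of `W` for `A`, for any bounded measurable `h`
the conditional expectation of `h(A, V, W)` given `(X, V, W)`, where `V = φ(X, Z, W)` is the
control variable, equals the integral of `h(·, V, W)` against the conditional distribution
`condDistrib A W μ (W ·)`; in particular it does not depend on `X`. -/
theorem condexp_given_control_variable
    {Ω E_A E_X E_Z E_W E_V : Type*} [MeasurableSpace Ω]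
    [MeasurableSpace E_A] [StandardBorelSpace E_A] [Nonempty E_A]
    [MeasurableSpace E_X] [StandardBorelSpace E_X]
    [MeasurableSpace E_Z] [StandardBorelSpace E_Z]
    [MeasurableSpace E_W] [StandardBorelSpace E_W]
    [MeasurableSpace E_V] [StandardBorelSpace E_V]
    (μ : Measure Ω) [IsProbabilityMeasure μ]
    (A : Ω → E_A) (X : Ω → E_X) (Z : Ω → E_Z) (W : Ω → E_W)
    (hA : Measurable A) (hX : Measurable X) (hZ : Measurable Z) (hW : Measurable W)
    (φ : E_X × E_Z × E_W → E_V) (hφ : Measurable φ)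
    (V : Ω → E_V) (hV : ∀ ω, V ω = φ (X ω, Z ω, W ω))
    (hsuff : ∀ f : E_A → ℝ, Measurable f → (∃ C, ∀ a, |f a| ≤ C) →
      μ[fun ω => f (A ω) |
          MeasurableSpace.comap (fun ω => (X ω, Z ω, W ω)) inferInstance]
        =ᵐ[μ] μ[fun ω => f (A ω) | MeasurableSpace.comap W inferInstance]) :
    ∀ h : E_A × E_V × E_W → ℝ, Measurable h → (∃ C, ∀ p, |h p| ≤ C) →
      μ[fun ω => h (A ω, V ω, W ω) |
          MeasurableSpace.comap (fun ω => (X ω, V ω, W ω)) inferInstance]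
        =ᵐ[μ] fun ω => ∫ a, h (a, V ω, W ω) ∂(condDistrib A W μ (W ω)) :=
  condexp_given_control_variable_general μ A X Z W hA hX hZ hW φ hφ V hV hsuff
end
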